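/- arXiv:math/0110229 — 3 statements merged into one kernel-verified Lean document; each statement's English description precedes it below -/
import Mathlib

section
/- Let h_1, ..., h_n be positive integers with distinct subset sums, and let v_1, ..., v_{n-1} be positive integers. For σ : {1,...,n-1} → ℤ/2, define exponents s_k(σ) = Σ_{j=1}^{k-1} (-1)^{σ(j)} v_j for k = 2,...,n, and the Laurent polynomial P_σ(λ) = h_1 + Σ_{k=2}^n h_k λ^{s_k(σ)}. If P_σ = P_μ as Laurent polynomials, then s_k(σ) = s_k(μ) for all k = 2, ..., n. -/
open LaurentPolynomial Finset

/-- Let `h_1, …, h_n` (here `h 0, …, h (n-1)`) be positive integers with distinct subset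
sums and `v_1, …, v_{n-1}` (here `v 0, …, v (n-2)`) positive integers.  For
`σ : {1,…,n-1} → ℤ/2` define `s_k(σ) = ∑_{j=1}^{k-1} (-1)^{σ(j)} v_j` (`k = 2,…,n`) and
`P_σ(λ) = h_1 + ∑_{k=2}^n h_k λ^{s_k(σ)}`.  If `P_σ = P_μ` then `s_k(σ) = s_k(μ)` for
all `k`. -/
theorem exponents_determined_by_polynomial (n : ℕ) (h v : ℕ → ℤ)
    (hh : ∀ i, i < n → 0 < h i) (hv : ∀ j, j < n - 1 → 0 < v j)
    (hdss : ∀ A B : Finset ℕ, A ⊆ range n → B ⊆ range n →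
      ∑ k ∈ A, h k = ∑ k ∈ B, h k → A = B)
    (σ μ : ℕ → ZMod 2)
    (hP : (C (h 0) + ∑ i ∈ range (n - 1),
        C (h (i + 1)) * T (∑ j ∈ range (i + 1), (-1) ^ (σ j).val * v j)
        : LaurentPolynomial ℤ) =
      C (h 0) + ∑ i ∈ range (n - 1),
        C (h (i + 1)) * T (∑ j ∈ range (i + 1), (-1) ^ (μ j).val * v j)) :
    ∀ i, i < n - 1 →
      (∑ j ∈ range (i + 1), (-1) ^ (σ j).val * v j) =
        ∑ j ∈ range (i + 1), (-1) ^ (μ j).val * v j := by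
  classical
  intro i hi
  have hn : 1 ≤ n := by omega
  set fσ : ℕ → ℤ := fun k => ∑ j ∈ range k, (-1) ^ (σ j).val * v j with hfσ
  set fμ : ℕ → ℤ := fun k => ∑ j ∈ range k, (-1) ^ (μ j).val * v j with hfμ
  have hPsum : (∑ k ∈ range n, C (h k) * T (fσ k) : LaurentPolynomial ℤ)
      = ∑ k ∈ range n, C (h k) * T (fμ k) := by
    obtain ⟨m, rfl⟩ : ∃ m, n = m + 1 := ⟨n - 1, by omega⟩
    rw [Finset.sum_range_succ', Finset.sum_range_succ']
    have h0σ : fσ 0 = 0 := by simp [hfσ]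
    have h0μ : fμ 0 = 0 := by simp [hfμ]
    rw [h0σ, h0μ, T_zero, mul_one, add_comm,
      add_comm (∑ i ∈ range m, C (h (i + 1)) * T (fμ (i + 1)))]
    simpa [hfσ, hfμ] using hP
  have key : ∀ e : ℤ, (range n).filter (fun k => fσ k = e)
      = (range n).filter (fun k => fμ k = e) := by
    intro e
    apply hdss _ _ (filter_subset _ _) (filter_subset _ _)
    have hc := congrArg (fun p : LaurentPolynomial ℤ => p.coeff e) hPsum
    simp only [AddMonoidAlgebra.coeff_sum] at hc
    rw [Finset.sum_apply', Finset.sum_apply'] at hc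
    simp only [← single_eq_C_mul_T, AddMonoidAlgebra.coeff_single, Finsupp.single_apply] at hc
    rw [sum_filter, sum_filter]
    exact hc
  have hmem : i + 1 ∈ (range n).filter (fun k => fσ k = fσ (i + 1)) := by
    simp only [Finset.mem_filter, Finset.mem_range]
    exact ⟨by omega, trivial⟩

  rw [key] at hmem
  have := (Finset.mem_filter.mp hmem).2
  show fσ (i + 1) = fμ (i + 1)
  exact this.symm
end

section
/- For positive integers h_3, h_2, v_2, v_1 ≥ 1 with (v_2 ≠ 2v_1 or h_2 ≠ h_3), and h_1 ≥ 1, the four Laurent polynomials P_1 = h_1 + h_2 λ^{-v_1} + h_3 λ^{-v_1-v_2}, P_2 = h_1 + h_2 λ^{-v_1} + h_3 λ^{-v_1+v_2}, P_3 = h_1 + h_2 λ^{v_1} + h_3 λ^{v_1+v_2}, P_4 = h_1 + h_2 λ^{v_1} + h_3 λ^{v_1-v_2} are pairwise distinct. -/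
open LaurentPolynomial

lemma coeff_aux (a b c n m k : ℤ) :
    ((C a + C b * T n + C c * T m : LaurentPolynomial ℤ).coeff k) =
    (if 0 = k then a else 0) + (if n = k then b else 0) + (if m = k then c else 0) := by
  rw [← single_eq_C_mul_T, ← single_eq_C_mul_T, ← single_eq_C]
  simp only [AddMonoidAlgebra.coeff_add, AddMonoidAlgebra.coeff_single, Finsupp.add_apply,
    Finsupp.single_apply]

lemma ne_of_coeff (p q : LaurentPolynomial ℤ) (k : ℤ) (h : p.coeff k ≠ q.coeff k) : p ≠ q :=
  fun e => h (by rw [e])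

/-- For positive integers `h₁, h₂, h₃, v₁, v₂ ≥ 1` with `v₂ ≠ 2v₁` or `h₂ ≠ h₃`,
the four Laurent polynomials `P₁ = h₁ + h₂λ^{-v₁} + h₃λ^{-v₁-v₂}`,
`P₂ = h₁ + h₂λ^{-v₁} + h₃λ^{-v₁+v₂}`, `P₃ = h₁ + h₂λ^{v₁} + h₃λ^{v₁+v₂}`,
`P₄ = h₁ + h₂λ^{v₁} + h₃λ^{v₁-v₂}` are pairwise distinct. -/
theorem four_flype_polynomials_distinct (h₁ h₂ h₃ v₁ v₂ : ℤ)
    (hh₁ : 1 ≤ h₁) (hh₂ : 1 ≤ h₂) (hh₃ : 1 ≤ h₃) (hv₁ : 1 ≤ v₁) (hv₂ : 1 ≤ v₂)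
    (hcond : v₂ ≠ 2 * v₁ ∨ h₂ ≠ h₃) :
    List.Pairwise (· ≠ ·)
      [(C h₁ + C h₂ * T (-v₁) + C h₃ * T (-v₁ - v₂) : LaurentPolynomial ℤ),
       C h₁ + C h₂ * T (-v₁) + C h₃ * T (-v₁ + v₂),
       C h₁ + C h₂ * T v₁ + C h₃ * T (v₁ + v₂),
       C h₁ + C h₂ * T v₁ + C h₃ * T (v₁ - v₂)] := by
  have h12 : (C h₁ + C h₂ * T (-v₁) + C h₃ * T (-v₁ - v₂) : LaurentPolynomial ℤ)
      ≠ C h₁ + C h₂ * T (-v₁) + C h₃ * T (-v₁ + v₂) :=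
    ne_of_coeff _ _ (-v₁ - v₂) (by rw [coeff_aux, coeff_aux]; split_ifs <;> omega)
  have h13 : (C h₁ + C h₂ * T (-v₁) + C h₃ * T (-v₁ - v₂) : LaurentPolynomial ℤ)
      ≠ C h₁ + C h₂ * T v₁ + C h₃ * T (v₁ + v₂) :=
    ne_of_coeff _ _ (-v₁) (by rw [coeff_aux, coeff_aux]; split_ifs <;> omega)
  have h14 : (C h₁ + C h₂ * T (-v₁) + C h₃ * T (-v₁ - v₂) : LaurentPolynomial ℤ)
      ≠ C h₁ + C h₂ * T v₁ + C h₃ * T (v₁ - v₂) :=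
    ne_of_coeff _ _ (-v₁ - v₂) (by rw [coeff_aux, coeff_aux]; split_ifs <;> omega)
  have h23 : (C h₁ + C h₂ * T (-v₁) + C h₃ * T (-v₁ + v₂) : LaurentPolynomial ℤ)
      ≠ C h₁ + C h₂ * T v₁ + C h₃ * T (v₁ + v₂) :=
    ne_of_coeff _ _ (-v₁) (by rw [coeff_aux, coeff_aux]; split_ifs <;> omega)
  have h24 : (C h₁ + C h₂ * T (-v₁) + C h₃ * T (-v₁ + v₂) : LaurentPolynomial ℤ)
      ≠ C h₁ + C h₂ * T v₁ + C h₃ * T (v₁ - v₂) :=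
    ne_of_coeff _ _ v₁ (by rw [coeff_aux, coeff_aux]; split_ifs <;> omega)
  have h34 : (C h₁ + C h₂ * T v₁ + C h₃ * T (v₁ + v₂) : LaurentPolynomial ℤ)
      ≠ C h₁ + C h₂ * T v₁ + C h₃ * T (v₁ - v₂) :=
    ne_of_coeff _ _ (v₁ + v₂) (by rw [coeff_aux, coeff_aux]; split_ifs <;> omega)
  simp only [List.pairwise_cons, List.mem_cons, List.not_mem_nil, List.mem_singleton,
    or_false]
  refine ⟨?_, ?_, ?_, fun a h => h.elim, List.Pairwise.nil⟩ <;> rintro q (rfl | rfl | rfl | rfl) <;> assumption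
end

section
/- For positive integers h_3, h_2, v_2, v_1 ≥ 1, the four Laurent polynomials Q_1 = h_2 λ^{-v_1} + h_3 λ^{-v_1-v_2}, Q_2 = h_2 λ^{-v_1} + h_3 λ^{-v_1+v_2}, Q_3 = 1 + λ + h_2 λ^{v_1} + h_3 λ^{v_1+v_2}, Q_4 = 1 + λ + h_2 λ^{v_1} + h_3 λ^{v_1-v_2} are pairwise distinct. -/
open LaurentPolynomial

private lemma app_CT (a n k : ℤ) : (C a * T n : LaurentPolynomial ℤ).coeff k = if n = k then a else 0 := by
  rw [← single_eq_C_mul_T]; exact Finsupp.single_apply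

private lemma app_one (k : ℤ) : (1 : LaurentPolynomial ℤ).coeff k = if (0:ℤ) = k then 1 else 0 := by
  rw [show (1:LaurentPolynomial ℤ) = C 1 * T 0 by simp, app_CT]

private lemma app_T (n k : ℤ) : (T n : LaurentPolynomial ℤ).coeff k = if n = k then 1 else 0 := by
  rw [show (T n :LaurentPolynomial ℤ) = C 1 * T n by simp, app_CT]

private lemma app_add (p q : LaurentPolynomial ℤ) (k : ℤ) : (p+q).coeff k = p.coeff k + q.coeff k := rfl

set_option maxHeartbeats 1000000 in
/-- For positive integers `h₂, h₃, v₁, v₂ ≥ 1`, the four Laurent polynomials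
`Q₁ = h₂λ^{-v₁} + h₃λ^{-v₁-v₂}`, `Q₂ = h₂λ^{-v₁} + h₃λ^{-v₁+v₂}`,
`Q₃ = 1 + λ + h₂λ^{v₁} + h₃λ^{v₁+v₂}`, `Q₄ = 1 + λ + h₂λ^{v₁} + h₃λ^{v₁-v₂}`
are pairwise distinct. -/
theorem four_zero_case_polynomials_distinct (h₂ h₃ v₁ v₂ : ℤ)
    (hh₂ : 1 ≤ h₂) (hh₃ : 1 ≤ h₃) (hv₁ : 1 ≤ v₁) (hv₂ : 1 ≤ v₂) :
    List.Pairwise (· ≠ ·)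
      [(C h₂ * T (-v₁) + C h₃ * T (-v₁ - v₂) : LaurentPolynomial ℤ),
       C h₂ * T (-v₁) + C h₃ * T (-v₁ + v₂),
       1 + T 1 + C h₂ * T v₁ + C h₃ * T (v₁ + v₂),
       1 + T 1 + C h₂ * T v₁ + C h₃ * T (v₁ - v₂)] := by
  simp only [List.pairwise_cons, List.mem_cons, List.not_mem_nil, or_false, List.mem_singleton,
    and_true]
  refine ⟨?_, ?_, ?_⟩
  · rintro p (rfl | rfl | rfl) <;> intro heq
    · have h := congrArg (fun p : LaurentPolynomial ℤ => p.coeff (-v₁ + v₂)) heq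
      simp only [app_add, app_CT, app_one, app_T] at h
      split_ifs at h <;> omega
    · have h := congrArg (fun p : LaurentPolynomial ℤ => p.coeff 1) heq
      simp only [app_add, app_CT, app_one, app_T] at h
      split_ifs at h <;> omega
    · have h := congrArg (fun p : LaurentPolynomial ℤ => p.coeff 1) heq
      simp only [app_add, app_CT, app_one, app_T] at h
      split_ifs at h <;> omega
  · rintro p (rfl | rfl) <;> intro heq
    · have h0 := congrArg (fun p : LaurentPolynomial ℤ => p.coeff 0) heq
      have h1 := congrArg (fun p : LaurentPolynomial ℤ => p.coeff 1) heq
      simp only [app_add, app_CT, app_one, app_T] at h0 h1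
      split_ifs at h0 h1 <;> omega
    · have h := congrArg (fun p : LaurentPolynomial ℤ => p.coeff 0) heq
      simp only [app_add, app_CT, app_one, app_T] at h
      split_ifs at h <;> omega
  · refine ⟨?_, fun _ h => h.elim, List.Pairwise.nil⟩
    rintro p rfl heq
    have h := congrArg (fun p : LaurentPolynomial ℤ => p.coeff (v₁ + v₂)) heq
    simp only [app_add, app_CT, app_one, app_T] at h
    split_ifs at h <;> omega
end
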